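/- Let s, z ∈ ℝⁿ be linearly independent with sᵀz > 0, let τ > 0, γ > 0, and define v = √(sᵀs)·(z/(sᵀz) − s/(sᵀs)), w = √(zᵀz)·(s/(sᵀz) − z/(zᵀz)), and φ* = −(sᵀz)² / ((sᵀs)(zᵀz) − (sᵀz)²). Let φ > φ* and set φᴴ = φ*(1 − φ)/(φ* − φ). Then the matrix H = (1/τ)I − (1/τ) zzᵀ/(zᵀz) + (1/γ) ssᵀ/(sᵀz) + (1/τ)φᴴ wwᵀ is the inverse of the matrix B = τI − τ ssᵀ/(sᵀs) + γ zzᵀ/(sᵀz) + τφ vvᵀ, i.e., HB = I. -/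

import Mathlib

/-!
Both matrices are a multiple of the identity plus a term living on `span {s, z}`: with `P` the
`2 × n` matrix with rows `s`, `z`, write
`B = τ • 1 + Pᵀ β P` and `H = τ⁻¹ • 1 + Pᵀ α P`; then `H B = 1` reduces to the `2 × 2` identity
`τ⁻¹ β + τ α + α (P Pᵀ) β = 0`, where `P Pᵀ` is the Gram matrix of `s, z`. That identity is a
rational computation once `φᴴ` is rewritten as `(sᵀz)² (1 - φ) / ((sᵀz)² + φ D)` with
`D = (sᵀs)(zᵀz) - (sᵀz)² > 0` (strict Cauchy–Schwarz); the denominator equals `D (φ - φ*) > 0`.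
-/

open Matrix

noncomputable section

section Gram

variable {n R : Type*} [Fintype n] [CommRing R] [LinearOrder R] [IsStrictOrderedRing R]

theorem Matrix.dotProduct_self_nonneg (v : n → R) : 0 ≤ v ⬝ᵥ v :=
  Fintype.sum_nonneg fun i => mul_self_nonneg (v i)

theorem Matrix.dotProduct_self_pos {v : n → R} (hv : v ≠ 0) : 0 < v ⬝ᵥ v :=
  (dotProduct_self_nonneg v).lt_of_ne' (dotProduct_self_eq_zero.not.mpr hv)

theorem LinearIndependent.dotProduct_sq_lt {x y : n → R} (h : LinearIndependent R ![x, y]) :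
    (x ⬝ᵥ y) ^ 2 < (x ⬝ᵥ x) * (y ⬝ᵥ y) := by
  have hy : 0 < y ⬝ᵥ y := dotProduct_self_pos (by simpa using h.ne_zero 1)
  have hu : (y ⬝ᵥ y) • x - (x ⬝ᵥ y) • y ≠ 0 := by
    intro hu
    refine hy.ne' (LinearIndependent.pair_iff.mp h (y ⬝ᵥ y) (-(x ⬝ᵥ y)) ?_).1
    rwa [neg_smul, ← sub_eq_add_neg]
  have hpos := dotProduct_self_pos hu
  simp only [sub_dotProduct, dotProduct_sub, smul_dotProduct, dotProduct_smul,
    smul_eq_mul, dotProduct_comm y x] at hpos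
  nlinarith

end Gram

section Scalar

variable {F : Type*} [Field F]

theorem sq_add_mul_pos_of_neg_sq_div_lt [LinearOrder F] [IsStrictOrderedRing F] {b D φ : F}
    (hD : 0 < D) (hφ : -b ^ 2 / D < φ) : 0 < b ^ 2 + φ * D := by
  rw [div_lt_iff₀ hD] at hφ
  linarith

theorem broyden_dual_parameter_eq {b D φ : F} (hD : D ≠ 0) :
    -b ^ 2 / D * (1 - φ) / (-b ^ 2 / D - φ) = b ^ 2 * (1 - φ) / (b ^ 2 + φ * D) := by
  have hden : -b ^ 2 / D - φ = -(b ^ 2 + φ * D) / D := by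
    field_simp
    ring
  rw [hden]
  field_simp

end Scalar

section LowRank

variable {k n R : Type*} [Fintype k] [CommRing R]

theorem vecMulVec_transpose_mulVec (P : Matrix k n R) (x y : k → R) :
    vecMulVec (Pᵀ *ᵥ x) (Pᵀ *ᵥ y) = Pᵀ * vecMulVec x y * P := by
  rw [← mul_vecMulVec, Matrix.mul_assoc, vecMulVec_mul, mulVec_transpose]

theorem smul_one_add_conj_mul_smul_one_add_conj_eq_one [Fintype n] [DecidableEq n]
    (P : Matrix k n R) {c d : R} {α β : Matrix k k R} (hcd : c * d = 1)
    (h : c • β + d • α + α * (P * Pᵀ) * β = 0) :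
    (c • 1 + Pᵀ * α * P) * (d • 1 + Pᵀ * β * P) = 1 := by
  have hexp : (c • 1 + Pᵀ * α * P) * (d • 1 + Pᵀ * β * P)
      = (c * d) • 1 + Pᵀ * (c • β + d • α + α * (P * Pᵀ) * β) * P := by
    simp only [Matrix.add_mul, Matrix.mul_add, Matrix.smul_mul, Matrix.mul_smul, Matrix.one_mul,
      Matrix.mul_one, smul_smul, Matrix.mul_assoc, smul_add, mul_comm d c]
    abel
  rw [hexp, hcd, h, Matrix.mul_zero, Matrix.zero_mul, one_smul, add_zero]

end LowRank

section Pair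

variable {n R : Type*} [CommRing R]

theorem transpose_of_pair_mulVec (x y : n → R) (p q : R) :
    (of ![x, y])ᵀ *ᵥ ![p, q] = p • x + q • y := by
  ext i
  simp [mulVec, dotProduct, Fin.sum_univ_two, mul_comm]

theorem of_pair_mul_transpose [Fintype n] (x y : n → R) :
    of ![x, y] * (of ![x, y])ᵀ = !![x ⬝ᵥ x, x ⬝ᵥ y; x ⬝ᵥ y, y ⬝ᵥ y] := by
  ext i j
  fin_cases i <;> fin_cases j
  exacts [rfl, rfl, dotProduct_comm y x, rfl]

end Pair

theorem vecMulVec_sqrt_smul_self {m ι : Type*} [Fintype m] (x : m → ℝ) (u : ι → ℝ) :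
    vecMulVec (Real.sqrt (x ⬝ᵥ x) • u) (Real.sqrt (x ⬝ᵥ x) • u) = (x ⬝ᵥ x) • vecMulVec u u := by
  rw [smul_vecMulVec, vecMulVec_smul, smul_smul,
    Real.mul_self_sqrt (dotProduct_self_nonneg x)]

section Broyden

variable {n : ℕ}

/- The matrices `β` and `α` of the header, with `a = sᵀs`, `b = sᵀz`, `c = zᵀz`; the last
summands come from `v = √a (-a⁻¹ s + b⁻¹ z)` and `w = √c (b⁻¹ s - c⁻¹ z)`. -/
def broydenCoeffs (a b τ γ φ : ℝ) : Matrix (Fin 2) (Fin 2) ℝ :=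
  -(τ / a) • vecMulVec ![1, 0] ![1, 0] + (γ / b) • vecMulVec ![0, 1] ![0, 1]
    + (τ * φ * a) • vecMulVec ![-a⁻¹, b⁻¹] ![-a⁻¹, b⁻¹]

def inverseBroydenCoeffs (b c τ γ φH : ℝ) : Matrix (Fin 2) (Fin 2) ℝ :=
  -(1 / (τ * c)) • vecMulVec ![0, 1] ![0, 1] + (1 / (γ * b)) • vecMulVec ![1, 0] ![1, 0]
    + (φH / τ * c) • vecMulVec ![b⁻¹, -c⁻¹] ![b⁻¹, -c⁻¹]

theorem broyden_eq_smul_one_add_conj (s z v : Fin n → ℝ) (τ γ φ : ℝ)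
    (hv : v = Real.sqrt (s ⬝ᵥ s) • ((s ⬝ᵥ z)⁻¹ • z - (s ⬝ᵥ s)⁻¹ • s)) :
    τ • (1 : Matrix (Fin n) (Fin n) ℝ) - (τ / (s ⬝ᵥ s)) • vecMulVec s s
        + (γ / (s ⬝ᵥ z)) • vecMulVec z z + (τ * φ) • vecMulVec v v
      = τ • 1 + (of ![s, z])ᵀ * broydenCoeffs (s ⬝ᵥ s) (s ⬝ᵥ z) τ γ φ * of ![s, z] := by
  simp only [broydenCoeffs, Matrix.mul_add, Matrix.add_mul, Matrix.mul_smul, Matrix.smul_mul,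
    ← vecMulVec_transpose_mulVec, transpose_of_pair_mulVec, hv, vecMulVec_sqrt_smul_self]
  simp only [add_vecMulVec, vecMulVec_add, sub_vecMulVec, vecMulVec_sub, smul_vecMulVec,
    vecMulVec_smul, neg_vecMulVec, vecMulVec_neg, neg_smul, one_smul, zero_smul, add_zero,
    zero_add]
  module

theorem inverseBroyden_eq_smul_one_add_conj (s z w : Fin n → ℝ) (τ γ φH : ℝ)
    (hw : w = Real.sqrt (z ⬝ᵥ z) • ((s ⬝ᵥ z)⁻¹ • s - (z ⬝ᵥ z)⁻¹ • z)) :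
    (1 / τ) • (1 : Matrix (Fin n) (Fin n) ℝ) - (1 / (τ * (z ⬝ᵥ z))) • vecMulVec z z
        + (1 / (γ * (s ⬝ᵥ z))) • vecMulVec s s + (φH / τ) • vecMulVec w w
      = (1 / τ) • 1
        + (of ![s, z])ᵀ * inverseBroydenCoeffs (s ⬝ᵥ z) (z ⬝ᵥ z) τ γ φH * of ![s, z] := by
  simp only [inverseBroydenCoeffs, Matrix.mul_add, Matrix.add_mul, Matrix.mul_smul,
    Matrix.smul_mul, ← vecMulVec_transpose_mulVec, transpose_of_pair_mulVec, hw,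
    vecMulVec_sqrt_smul_self]
  simp only [add_vecMulVec, vecMulVec_add, sub_vecMulVec, vecMulVec_sub, smul_vecMulVec,
    vecMulVec_smul, neg_vecMulVec, vecMulVec_neg, neg_smul, one_smul, zero_smul, add_zero,
    zero_add]
  module

theorem smul_broydenCoeffs_add_smul_inverseBroydenCoeffs_add_mul_eq_zero {a b c τ γ φ φH : ℝ}
    (ha : a ≠ 0) (hb : b ≠ 0) (hc : c ≠ 0) (hτ : τ ≠ 0) (hγ : γ ≠ 0)
    (hE : b ^ 2 + φ * (a * c - b ^ 2) ≠ 0)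
    (hφH : φH = b ^ 2 * (1 - φ) / (b ^ 2 + φ * (a * c - b ^ 2))) :
    (1 / τ) • broydenCoeffs a b τ γ φ + τ • inverseBroydenCoeffs b c τ γ φH
      + inverseBroydenCoeffs b c τ γ φH * !![a, b; b, c] * broydenCoeffs a b τ γ φ = 0 := by
  subst hφH
  ext i j
  simp only [broydenCoeffs, inverseBroydenCoeffs, Matrix.add_apply, Matrix.smul_apply, mul_apply,
    Fin.sum_univ_two, vecMulVec_apply, of_apply, Matrix.zero_apply, smul_eq_mul]
  fin_cases i <;> fin_cases j <;>
  · simp only [Fin.zero_eta, Fin.mk_one, cons_val_zero, cons_val_one]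
    field_simp
    ring

end Broyden

/-- the explicit inverse `H` of the memoryless modified spectral scaling
Broyden family matrix `B`, i.e. `H * B = 1`. -/
theorem broyden_family_inverse
    {n : ℕ} (s z : Fin n → ℝ) (τ γ φ φstar φH : ℝ)
    (hind : LinearIndependent ℝ ![s, z])
    (hsz : 0 < s ⬝ᵥ z) (hτ : 0 < τ) (hγ : 0 < γ)
    (v w : Fin n → ℝ)
    (hv : v = Real.sqrt (s ⬝ᵥ s) • ((s ⬝ᵥ z)⁻¹ • z - (s ⬝ᵥ s)⁻¹ • s))
    (hw : w = Real.sqrt (z ⬝ᵥ z) • ((s ⬝ᵥ z)⁻¹ • s - (z ⬝ᵥ z)⁻¹ • z))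
    (hφstar : φstar = -(s ⬝ᵥ z) ^ 2 / ((s ⬝ᵥ s) * (z ⬝ᵥ z) - (s ⬝ᵥ z) ^ 2))
    (hφ : φstar < φ)
    (hφH : φH = φstar * (1 - φ) / (φstar - φ)) :
    ((1 / τ) • (1 : Matrix (Fin n) (Fin n) ℝ)
        - (1 / (τ * (z ⬝ᵥ z))) • vecMulVec z z
        + (1 / (γ * (s ⬝ᵥ z))) • vecMulVec s s
        + (φH / τ) • vecMulVec w w) *
      (τ • (1 : Matrix (Fin n) (Fin n) ℝ)
        - (τ / (s ⬝ᵥ s)) • vecMulVec s s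
        + (γ / (s ⬝ᵥ z)) • vecMulVec z z
        + (τ * φ) • vecMulVec v v) = 1 := by
  have hs : 0 < s ⬝ᵥ s := dotProduct_self_pos (by simpa using hind.ne_zero 0)
  have hz : 0 < z ⬝ᵥ z := dotProduct_self_pos (by simpa using hind.ne_zero 1)
  have hD : 0 < (s ⬝ᵥ s) * (z ⬝ᵥ z) - (s ⬝ᵥ z) ^ 2 := sub_pos.mpr hind.dotProduct_sq_lt
  have hE := sq_add_mul_pos_of_neg_sq_div_lt hD (hφstar ▸ hφ)
  rw [inverseBroyden_eq_smul_one_add_conj s z w τ γ φH hw,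
    broyden_eq_smul_one_add_conj s z v τ γ φ hv]
  refine smul_one_add_conj_mul_smul_one_add_conj_eq_one _ (one_div_mul_cancel hτ.ne') ?_
  rw [of_pair_mul_transpose]
  exact smul_broydenCoeffs_add_smul_inverseBroydenCoeffs_add_mul_eq_zero hs.ne' hsz.ne' hz.ne'
    hτ.ne' hγ.ne' hE.ne' (by rw [hφH, hφstar, broyden_dual_parameter_eq hD.ne'])
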